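/- Let G be an α-critical graph, u a vertex of G, and e an edge of G not incident to u such that one endpoint of e is adjacent to u. Then e is a critical edge of G − u and there is a maximum stable set of G − e avoiding u. -/

import Mathlib

open SimpleGraph

variable {V : Type*}

/-- The maximum size of an independent (stable) set of a simple graph. -/
noncomputable def alpha (G : SimpleGraph V) : ℕ :=
  sSup {n | ∃ s : Finset V, (∀ x ∈ s, ∀ y ∈ s, ¬ G.Adj x y) ∧ s.card = n}

/-- A graph is α-critical if deleting any edge increases α. -/
def AlphaCritical (G : SimpleGraph V) : Prop :=
  ∀ x y : V, G.Adj x y → alpha G < alpha (G.deleteEdges {s(x, y)})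

/-- `G` contains a totally odd K₄-subdivision: four distinct branch vertices joined by
six internally disjoint paths of odd length. -/
def HasTOK4 (G : SimpleGraph V) : Prop :=
  ∃ b : Fin 4 → V, Function.Injective b ∧
  ∃ P : ∀ i j : Fin 4, G.Walk (b i) (b j),
    (∀ i j, i ≠ j → (P i j).IsPath) ∧
    (∀ i j, i ≠ j → Odd (P i j).length) ∧
    (∀ i j k l : Fin 4, i ≠ j → k ≠ l → s(i, j) ≠ s(k, l) →
      ∀ v : V, v ∈ (P i j).support → v ∈ (P k l).support →
        (v = b i ∨ v = b j) ∧ (v = b k ∨ v = b l))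

/-- `G` is (isomorphic to) a totally odd K₄-subdivision: it has one that uses all
vertices and all edges of `G`. -/
def IsTOK4 (G : SimpleGraph V) : Prop :=
  ∃ b : Fin 4 → V, Function.Injective b ∧
  ∃ P : ∀ i j : Fin 4, G.Walk (b i) (b j),
    (∀ i j, i ≠ j → (P i j).IsPath) ∧
    (∀ i j, i ≠ j → Odd (P i j).length) ∧
    (∀ i j k l : Fin 4, i ≠ j → k ≠ l → s(i, j) ≠ s(k, l) →
      ∀ v : V, v ∈ (P i j).support → v ∈ (P k l).support →
        (v = b i ∨ v = b j) ∧ (v = b k ∨ v = b l)) ∧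
    (∀ v : V, ∃ i j, i ≠ j ∧ v ∈ (P i j).support) ∧
    (∀ e ∈ G.edgeSet, ∃ i j, i ≠ j ∧ e ∈ (P i j).edges)

/-- `G` is an odd cycle: a cycle of odd length passing through all vertices
and using all edges of `G`. -/
def IsOddCycle (G : SimpleGraph V) : Prop :=
  ∃ (v : V) (w : G.Walk v v), w.IsCycle ∧ Odd w.length ∧
    (∀ u : V, u ∈ w.support) ∧ (∀ e ∈ G.edgeSet, e ∈ w.edges)

/-- `G` is isomorphic to the complete graph on one vertex. -/
def IsK1 (G : SimpleGraph V) : Prop := Nonempty (G ≃g (⊤ : SimpleGraph (Fin 1)))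

/-- `G` is isomorphic to the complete graph on two vertices. -/
def IsK2 (G : SimpleGraph V) : Prop := Nonempty (G ≃g (⊤ : SimpleGraph (Fin 2)))

/-!
Let `S` be a maximum stable set of `G - xy`. Since `xy` is critical, `S` is not stable in `G`, so it
contains both `x` and `y`; as `u` is adjacent to `x` in `G - xy`, `S` avoids `u`. Hence `S` is a
stable set of `(G - u) - xy`, and `α((G - u) - xy) ≥ |S| = α(G - xy) > α(G) ≥ α(G - u)`.
-/

open Finset

namespace SimpleGraph

variable {G : SimpleGraph V}

theorem isIndepSet_iff_forall_not_adj {s : Set V} :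
    G.IsIndepSet s ↔ ∀ x ∈ s, ∀ y ∈ s, ¬ G.Adj x y :=
  ⟨fun h _ hx _ hy hxy => h hx hy hxy.ne hxy, fun h x hx y hy _ => h x hx y hy⟩

theorem alpha_eq_indepNum (G : SimpleGraph V) : alpha G = G.indepNum := by
  simp only [alpha, indepNum, isNIndepSet_iff, isIndepSet_iff_forall_not_adj, Finset.mem_coe]

theorem isIndepSet_induce_iff {s : Set V} {t : Set s} :
    (G.induce s).IsIndepSet t ↔ G.IsIndepSet (Subtype.val '' t) := by
  simp [Set.Pairwise]

theorem indepNum_induce_le [Finite V] (s : Set V) : (G.induce s).indepNum ≤ G.indepNum := by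
  obtain ⟨t, ht⟩ := (G.induce s).exists_isNIndepSet_indepNum
  rw [← ht.card_eq, ← t.card_map (Function.Embedding.subtype _)]
  refine IsIndepSet.card_le_indepNum ?_
  rw [Finset.coe_map]
  exact isIndepSet_induce_iff.1 ht.isIndepSet

theorem IsIndepSet.card_le_indepNum_induce [Finite V] {s : Set V} {t : Finset V}
    (ht : G.IsIndepSet t) (hts : ↑t ⊆ s) : #t ≤ (G.induce s).indepNum := by
  classical
  have hcard : #(t.subtype (· ∈ s)) = #t := by
    rw [Finset.card_subtype, Finset.filter_true_of_mem (fun _ hv => hts hv)]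
  refine hcard ▸ IsIndepSet.card_le_indepNum (isIndepSet_induce_iff.2 ?_)
  refine ht.mono ?_
  rintro _ ⟨⟨v, _⟩, hv, rfl⟩
  exact Finset.mem_subtype.1 hv

theorem induce_deleteEdges_singleton {s : Set V} {x y : V} (hx : x ∈ s) (hy : y ∈ s) :
    (G.induce s).deleteEdges {s(⟨x, hx⟩, ⟨y, hy⟩)} = (G.deleteEdges {s(x, y)}).induce s := by
  ext ⟨a, ha⟩ ⟨b, hb⟩
  simp

theorem IsIndepSet.mem_of_deleteEdges_of_not_isIndepSet {x y : V} {S : Set V}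
    (hS : (G.deleteEdges {s(x, y)}).IsIndepSet S) (hSG : ¬ G.IsIndepSet S) : x ∈ S ∧ y ∈ S := by
  by_contra hxy
  refine hSG fun a ha b hb hab hadj => hS ha hb hab (deleteEdges_adj.2 ⟨hadj, ?_⟩)
  simp only [Set.mem_singleton_iff, Sym2.eq_iff]
  rintro (⟨rfl, rfl⟩ | ⟨rfl, rfl⟩)
  exacts [hxy ⟨ha, hb⟩, hxy ⟨hb, ha⟩]

theorem IsNIndepSet.mem_of_indepNum_lt_deleteEdges [Finite V] {x y : V} {S : Finset V}
    (hlt : G.indepNum < (G.deleteEdges {s(x, y)}).indepNum)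
    (hS : (G.deleteEdges {s(x, y)}).IsNIndepSet (G.deleteEdges {s(x, y)}).indepNum S) :
    x ∈ S ∧ y ∈ S :=
  hS.isIndepSet.mem_of_deleteEdges_of_not_isIndepSet fun hSG =>
    (hSG.card_le_indepNum.trans_lt (hS.card_eq ▸ hlt)).false

end SimpleGraph

theorem stmt_10 {V : Type*} [Fintype V] (G : SimpleGraph V) (hG : AlphaCritical G)
    (u x y : V) (hxy : G.Adj x y) (hxu : x ≠ u) (hyu : y ≠ u) (hux : G.Adj u x) :
    alpha (G.induce {v | v ≠ u}) <
      alpha ((G.induce {v | v ≠ u}).deleteEdges {s((⟨x, hxu⟩ : {v // v ≠ u}), ⟨y, hyu⟩)}) ∧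
    ∃ S : Finset V, (∀ a ∈ S, ∀ b ∈ S, ¬ (G.deleteEdges {s(x, y)}).Adj a b) ∧
      S.card = alpha (G.deleteEdges {s(x, y)}) ∧ u ∉ S := by
  have hlt := hG x y hxy
  simp only [alpha_eq_indepNum] at hlt ⊢
  obtain ⟨S, hS⟩ := (G.deleteEdges {s(x, y)}).exists_isNIndepSet_indepNum
  obtain ⟨hxS, -⟩ := hS.mem_of_indepNum_lt_deleteEdges hlt
  have hux' : (G.deleteEdges {s(x, y)}).Adj u x := by
    refine deleteEdges_adj.2 ⟨hux, ?_⟩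
    simp only [Set.mem_singleton_iff, Sym2.eq_iff]
    rintro (⟨h, -⟩ | ⟨h, -⟩)
    exacts [hxu h.symm, hyu h.symm]
  have huS : u ∉ S := fun huS => hS.isIndepSet huS hxS hux'.ne hux'
  refine ⟨?_, S, isIndepSet_iff_forall_not_adj.1 hS.isIndepSet, hS.card_eq, huS⟩
  rw [induce_deleteEdges_singleton]
  calc (G.induce {v | v ≠ u}).indepNum ≤ G.indepNum := indepNum_induce_le _
    _ < (G.deleteEdges {s(x, y)}).indepNum := hlt
    _ = #S := hS.card_eq.symm
    _ ≤ _ := hS.isIndepSet.card_le_indepNum_induce fun v hv => ne_of_mem_of_not_mem hv huS
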